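/- For every natural number d and every real L with 0 < L ≤ 8^d, it holds that 3·√(L·2^d) − 2·L/2^d ≥ L^{2/3}. -/

import Mathlib

/-!
Write `L = c³` with `c = L^{1/3}`; the hypothesis `L ≤ 8^d` says `c ≤ t := 2^d`. Then
`√(L t) ≥ √(c⁴) = c²` and `L / t ≤ c³ / c = c²`, so `3√(L t) - 2L/t ≥ 3c² - 2c² = c² = L^{2/3}`.
-/

lemma sq_le_three_mul_sqrt_sub_two_mul_div {c t : ℝ} (hc : 0 < c) (hct : c ≤ t) :
    c ^ 2 ≤ 3 * √(c ^ 3 * t) - 2 * c ^ 3 / t := by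
  have hsqrt : c ^ 2 ≤ √(c ^ 3 * t) := by
    rw [← Real.sqrt_sq (by positivity : 0 ≤ c ^ 2)]
    exact Real.sqrt_le_sqrt (by nlinarith [pow_pos hc 3])
  have hdiv : c ^ 3 / t ≤ c ^ 2 := by
    rw [div_le_iff₀ (hc.trans_le hct)]
    nlinarith [sq_nonneg c]
  rw [mul_div_assoc]
  linarith

theorem stmt_3 (d : ℕ) (L : ℝ) (hL : 0 < L) (hLd : L ≤ 8^d) :
    3 * Real.sqrt (L * 2^d) - 2 * L / 2^d ≥ L ^ ((2:ℝ)/3) := by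
  set c := L ^ (3⁻¹ : ℝ)
  have hc : 0 < c := Real.rpow_pos_of_pos hL _
  have hcube : c ^ 3 = L := Real.rpow_inv_natCast_pow hL.le (by norm_num)
  have hct : c ≤ 2 ^ d := by
    rw [← pow_le_pow_iff_left₀ hc.le (by positivity) (by norm_num : 3 ≠ 0), ← pow_mul, pow_mul',
      hcube]
    norm_num [hLd]
  have hsq : L ^ ((2:ℝ)/3) = c ^ 2 := by
    rw [div_eq_inv_mul, ← Real.rpow_mul_natCast hL.le]
    norm_num
  rw [ge_iff_le, hsq, ← hcube]
  exact sq_le_three_mul_sqrt_sub_two_mul_div hc hct
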